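/- arXiv:1505.00879 — 4 statements merged into one kernel-verified Lean document; each statement's English description precedes it below -/
import Mathlib

section
/- Let $f : [0,T] \times [-M,M] \to \mathbb{R}$ satisfy $RV^{p,q}(f) < \infty$ for some $p, q \ge 1$. Let $p' > p$ and $q' = (p'/p) q$. Then $RV^{p',q'}(f) \le \big( \sup_{t,s,x,y} |\Delta f(t,s;x,y)| \big)^{(p'-p)/p'} \cdot \big( RV^{p,q}(f) \big)^{q/q'}$. -/
open Set Finset Filter MeasureTheory
open scoped ENNReal NNReal

/-- `t` is a (monotone) partition of `[a, b]` with `n` subintervals. -/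
def IsPartition {n : ℕ} (a b : ℝ) (t : Fin (n + 1) → ℝ) : Prop :=
  Monotone t ∧ t 0 = a ∧ t (Fin.last n) = b

/-- The rectangular increment `Δ f(t,s;x,y) = f t x - f t y - (f s x - f s y)`. -/
def rectInc (f : ℝ → ℝ → ℝ) (t s x y : ℝ) : ℝ :=
  f t x - f t y - (f s x - f s y)

/-- The `p`-variation sum supremum `‖g‖_{[a,b];p}^p` (as an extended nonnegative real). -/
noncomputable def pVar (p a b : ℝ) (g : ℝ → ℝ) : ℝ≥0∞ :=
  ⨆ (n : ℕ) (x : Fin (n + 1) → ℝ) (_ : IsPartition a b x),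
    ∑ i : Fin n, (ENNReal.ofReal |g (x i.succ) - g (x i.castSucc)|) ^ p

/-- The joint left `(r,s)`-variation
`LV^{r,s}(f) = sup_π [ ∑_j ( ∑_i |Δ_iΔ_j f(t_i, x_j)|^r )^{s/r} ]^{1/s}`
over grid partitions of `[t₀,t₁] × [x₀,x₁]` (inner sum over the time index). -/
noncomputable def LV (r s t₀ t₁ x₀ x₁ : ℝ) (f : ℝ → ℝ → ℝ) : ℝ≥0∞ :=
  ⨆ (n : ℕ) (m : ℕ) (t : Fin (n + 1) → ℝ) (x : Fin (m + 1) → ℝ)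
    (_ : IsPartition t₀ t₁ t) (_ : IsPartition x₀ x₁ x),
    (∑ j : Fin m, (∑ i : Fin n,
      (ENNReal.ofReal
        |rectInc f (t i.succ) (t i.castSucc) (x j.succ) (x j.castSucc)|) ^ r) ^ (s / r)) ^ (1 / s)

/-- The joint right `(p,q)`-variation
`RV^{p,q}(f) = sup_π [ ∑_i ( ∑_j |Δ_iΔ_j f(t_i, x_j)|^p )^{q/p} ]^{1/q}`
over grid partitions of `[t₀,t₁] × [x₀,x₁]` (inner sum over the space index). -/
noncomputable def RV (p q t₀ t₁ x₀ x₁ : ℝ) (f : ℝ → ℝ → ℝ) : ℝ≥0∞ :=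
  ⨆ (n : ℕ) (m : ℕ) (t : Fin (n + 1) → ℝ) (x : Fin (m + 1) → ℝ)
    (_ : IsPartition t₀ t₁ t) (_ : IsPartition x₀ x₁ x),
    (∑ i : Fin n, (∑ j : Fin m,
      (ENNReal.ofReal
        |rectInc f (t i.succ) (t i.castSucc) (x j.succ) (x j.castSucc)|) ^ p) ^ (q / p)) ^ (1 / q)

/-!
On a fixed grid every increment is bounded by `S = sup |Δf|`, so
`|Δ|^{p'} ≤ S^{p'-p} |Δ|^p`. Summing over the space index and raising to `q'/p' = q/p`
bounds each time-row of the `(p',q')`-sum by `S^{(p'-p)q/p}` times the corresponding row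
of the `(p,q)`-sum; the `1/q'`-th power of the total then gives the inequality on that
grid, and taking the supremum over grids gives it for `RV`.
-/

namespace ENNReal

theorem rpow_le_rpow_sub_mul_rpow {a S : ℝ≥0∞} {p p' : ℝ} (ha : a ≤ S) (hp : 0 ≤ p)
    (hpp' : p ≤ p') : a ^ p' ≤ S ^ (p' - p) * a ^ p := by
  calc a ^ p' = a ^ (p' - p) * a ^ p := by
        rw [← rpow_add_of_nonneg _ _ (sub_nonneg.2 hpp') hp, sub_add_cancel]
    _ ≤ S ^ (p' - p) * a ^ p := by gcongr

end ENNReal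

noncomputable def mixedNorm {ι κ : Type*} [Fintype ι] [Fintype κ] (p q : ℝ)
    (a : ι → κ → ℝ≥0∞) : ℝ≥0∞ :=
  (∑ i, (∑ j, a i j ^ p) ^ (q / p)) ^ (1 / q)

section MixedNorm

variable {ι κ : Type*} [Fintype ι] [Fintype κ]

theorem mixedNorm_le_rpow_mul_mixedNorm_rpow {p q p' q' : ℝ} {S : ℝ≥0∞}
    {a : ι → κ → ℝ≥0∞} (hp : 0 < p) (hq : 0 < q) (hpp' : p ≤ p') (hq' : q' = p' / p * q)
    (ha : ∀ i j, a i j ≤ S) :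
    mixedNorm p' q' a ≤ S ^ ((p' - p) / p') * mixedNorm p q a ^ (q / q') := by
  have hp' : 0 < p' := hp.trans_le hpp'
  have hq'_pos : 0 < q' := by rw [hq']; positivity
  have hqp : q' / p' = q / p := by rw [hq']; field_simp
  have hrow : ∀ i, (∑ j, a i j ^ p') ^ (q' / p')
      ≤ S ^ ((p' - p) * (q / p)) * (∑ j, a i j ^ p) ^ (q / p) := fun i =>
    calc (∑ j, a i j ^ p') ^ (q' / p')
        ≤ (S ^ (p' - p) * ∑ j, a i j ^ p) ^ (q / p) := by
          rw [hqp, Finset.mul_sum]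
          gcongr with j
          exact ENNReal.rpow_le_rpow_sub_mul_rpow (ha i j) hp.le hpp'
      _ = S ^ ((p' - p) * (q / p)) * (∑ j, a i j ^ p) ^ (q / p) := by
          rw [ENNReal.mul_rpow_of_nonneg _ _ (by positivity), ← ENNReal.rpow_mul]
  calc mixedNorm p' q' a
      ≤ (S ^ ((p' - p) * (q / p)) * ∑ i, (∑ j, a i j ^ p) ^ (q / p)) ^ (1 / q') := by
        rw [mixedNorm, Finset.mul_sum]
        gcongr with i
        exact hrow i
    _ = S ^ ((p' - p) / p') * mixedNorm p q a ^ (q / q') := by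
        rw [mixedNorm, ENNReal.mul_rpow_of_nonneg _ _ (by positivity), ← ENNReal.rpow_mul,
          ← ENNReal.rpow_mul]
        congr 2 <;> rw [hq'] <;> field_simp

end MixedNorm

noncomputable def gridInc {n m : ℕ} (f : ℝ → ℝ → ℝ) (t : Fin (n + 1) → ℝ)
    (x : Fin (m + 1) → ℝ) (i : Fin n) (j : Fin m) : ℝ≥0∞ :=
  ENNReal.ofReal |rectInc f (t i.succ) (t i.castSucc) (x j.succ) (x j.castSucc)|

theorem IsPartition.mem_Icc {n : ℕ} {a b : ℝ} {t : Fin (n + 1) → ℝ} (ht : IsPartition a b t)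
    (k : Fin (n + 1)) : t k ∈ Icc a b :=
  ⟨ht.2.1 ▸ ht.1 (Fin.zero_le k), ht.2.2 ▸ ht.1 (Fin.le_last k)⟩

theorem gridInc_le_iSup_rectInc {n m : ℕ} {t₀ t₁ x₀ x₁ : ℝ} {f : ℝ → ℝ → ℝ}
    {t : Fin (n + 1) → ℝ} {x : Fin (m + 1) → ℝ} (ht : IsPartition t₀ t₁ t)
    (hx : IsPartition x₀ x₁ x) (i : Fin n) (j : Fin m) :
    gridInc f t x i j ≤ ⨆ (t ∈ Icc t₀ t₁) (s ∈ Icc t₀ t₁) (x ∈ Icc x₀ x₁) (y ∈ Icc x₀ x₁),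
      ENNReal.ofReal |rectInc f t s x y| :=
  le_iSup₂_of_le _ (ht.mem_Icc _) <| le_iSup₂_of_le _ (ht.mem_Icc _) <|
    le_iSup₂_of_le _ (hx.mem_Icc _) <| le_iSup₂_of_le _ (hx.mem_Icc _) le_rfl

theorem RV_eq_iSup_mixedNorm (p q t₀ t₁ x₀ x₁ : ℝ) (f : ℝ → ℝ → ℝ) :
    RV p q t₀ t₁ x₀ x₁ f = ⨆ (n : ℕ) (m : ℕ) (t : Fin (n + 1) → ℝ) (x : Fin (m + 1) → ℝ)
      (_ : IsPartition t₀ t₁ t) (_ : IsPartition x₀ x₁ x), mixedNorm p q (gridInc f t x) :=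
  rfl

theorem mixedNorm_gridInc_le_RV {n m : ℕ} {p q t₀ t₁ x₀ x₁ : ℝ} {f : ℝ → ℝ → ℝ}
    {t : Fin (n + 1) → ℝ} {x : Fin (m + 1) → ℝ} (ht : IsPartition t₀ t₁ t)
    (hx : IsPartition x₀ x₁ x) :
    mixedNorm p q (gridInc f t x) ≤ RV p q t₀ t₁ x₀ x₁ f := by
  rw [RV_eq_iSup_mixedNorm]
  exact le_iSup_of_le n <| le_iSup_of_le m <| le_iSup_of_le t <| le_iSup_of_le x <|
    le_iSup_of_le ht <| le_iSup_of_le hx le_rfl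

theorem stmt3_general (T M p q p' q' : ℝ)
    (hp : 1 ≤ p) (hq : 1 ≤ q) (hp' : p < p') (hq' : q' = (p' / p) * q)
    (f : ℝ → ℝ → ℝ) :
    RV p' q' 0 T (-M) M f ≤
      (⨆ (t ∈ Set.Icc (0:ℝ) T) (s ∈ Set.Icc (0:ℝ) T)
        (x ∈ Set.Icc (-M) M) (y ∈ Set.Icc (-M) M),
          ENNReal.ofReal |rectInc f t s x y|) ^ ((p' - p) / p') *
      (RV p q 0 T (-M) M f) ^ (q / q') := by
  have hp0 : 0 < p := by linarith
  have hqq' : 0 ≤ q / q' := by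
    have : 0 < p' := by linarith
    exact div_nonneg (by linarith) (by rw [hq']; positivity)
  rw [RV_eq_iSup_mixedNorm]
  refine iSup_le fun n => iSup_le fun m => iSup_le fun t => iSup_le fun x =>
    iSup_le fun ht => iSup_le fun hx => ?_
  calc mixedNorm p' q' (gridInc f t x)
      ≤ _ * mixedNorm p q (gridInc f t x) ^ (q / q') :=
        mixedNorm_le_rpow_mul_mixedNorm_rpow hp0 (by linarith) hp'.le hq'
          (gridInc_le_iSup_rectInc ht hx)
    _ ≤ _ := by
        gcongr
        exact mixedNorm_gridInc_le_RV ht hx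

/-- Interpolation inequality for the joint right variation:
if `RV^{p,q}(f) < ∞`, `p' > p` and `q' = (p'/p)·q`, then
`RV^{p',q'}(f) ≤ (sup |Δf|)^{(p'-p)/p'} · (RV^{p,q}(f))^{q/q'}`. -/
theorem stmt3 (T M p q p' q' : ℝ) (hT : 0 < T) (hM : 0 < M)
    (hp : 1 ≤ p) (hq : 1 ≤ q) (hp' : p < p') (hq' : q' = (p' / p) * q)
    (f : ℝ → ℝ → ℝ) (hfin : RV p q 0 T (-M) M f ≠ ⊤) :
    RV p' q' 0 T (-M) M f ≤
      (⨆ (t ∈ Set.Icc (0:ℝ) T) (s ∈ Set.Icc (0:ℝ) T)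
        (x ∈ Set.Icc (-M) M) (y ∈ Set.Icc (-M) M),
          ENNReal.ofReal |rectInc f t s x y|) ^ ((p' - p) / p') *
      (RV p q 0 T (-M) M f) ^ (q / q') :=
  stmt3_general T M p q p' q' hp hq hp' hq' f
end

section
/- Let $g : \mathbb{R} \to \mathbb{R}$ have finite $p$-variation on every compact interval, i.e. $\|g\|_{[-Q,Q];p} < \infty$ for all $Q$, and let $\rho$ be a nonnegative function supported in $[0,2]$ with $\int \rho = 1$. Define the mollification $g_n(x) := \int_0^2 \rho(y)\, g(x - y/n)\, dy$. Then for every $M > 0$ and every $n \ge 1$, the $p$-variation of $g_n$ on $[-M,M]$ satisfies $\|g_n\|_{[-M,M];p} \le \|g\|_{[-M-2, M];p}$. -/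
open Set Finset Filter MeasureTheory
open scoped ENNReal NNReal

/-! With `μ = ρ(y) dy` on `[0,2]`, a probability measure, `gₙ x = ∫ g (x - y/n) dμ(y)`. Each
increment of `gₙ` is then the `μ`-average of the increments of `g` along the shifted partition
`xⱼ - y/n`, so by Jensen its `p`-th power is at most the average of their `p`-th powers. Summing,
the variation sum of `gₙ` is at most an average of variation sums of `g` over shifted partitions;
since `0 ≤ y/n ≤ 2`, each of them lies in `[-M-2, M]` and is bounded by `‖g‖_{[-M-2,M];p}^p`. -/

namespace IsPartition

variable {n : ℕ} {a b : ℝ} {x : Fin (n + 1) → ℝ}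

theorem sum_le_pVar (hx : IsPartition a b x) (p : ℝ) (g : ℝ → ℝ) :
    ∑ i : Fin n, (ENNReal.ofReal |g (x i.succ) - g (x i.castSucc)|) ^ p ≤ pVar p a b g :=
  le_iSup₂_of_le (f := fun n (x : Fin (n + 1) → ℝ) => ⨆ _ : IsPartition a b x, _) n x
    (le_iSup_of_le hx le_rfl)

theorem sub_const (hx : IsPartition a b x) (c : ℝ) :
    IsPartition (a - c) (b - c) fun i => x i - c :=
  ⟨fun _ _ hij => sub_le_sub_right (hx.1 hij) c, congrArg (· - c) hx.2.1,
    congrArg (· - c) hx.2.2⟩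

theorem cons_snoc (hx : IsPartition a b x) {a' b' : ℝ} (ha : a' ≤ a) (hb : b ≤ b') :
    IsPartition a' b' (Fin.cons a' (Fin.snoc x b' : Fin (n + 2) → ℝ) : Fin (n + 3) → ℝ) := by
  have hsnoc : Monotone (Fin.snoc x b' : Fin (n + 2) → ℝ) := by
    refine Fin.monotone_iff_le_succ.2 fun i => Fin.lastCases ?_ (fun j => ?_) i
    · simpa [hx.2.2] using hb
    · rw [Fin.succ_castSucc, Fin.snoc_castSucc, Fin.snoc_castSucc]
      exact hx.1 (Fin.castSucc_le_succ j)
  refine ⟨hsnoc.vecCons ?_, rfl, by simp⟩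
  simpa [← hx.2.1] using ha

end IsPartition

theorem pVar_mono {p a b c d : ℝ} {g : ℝ → ℝ} (ha : a ≤ c) (hb : d ≤ b) :
    pVar p c d g ≤ pVar p a b g := by
  refine iSup_le fun n => iSup_le fun x => iSup_le fun hx => ?_
  refine le_trans ?_ ((hx.cons_snoc ha hb).sum_le_pVar p g)
  -- split off the two extra increments, over `[a, c]` and `[d, b]`
  rw [Fin.sum_univ_succ]
  simp only [← Fin.succ_castSucc, Fin.cons_succ]
  rw [Fin.sum_univ_castSucc]
  simp only [Fin.succ_castSucc, Fin.snoc_castSucc]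
  exact le_add_left le_self_add

theorem pVar_comp_sub_const_le (p a b c : ℝ) (g : ℝ → ℝ) :
    pVar p a b (fun x => g (x - c)) ≤ pVar p (a - c) (b - c) g :=
  iSup_le fun _ => iSup_le fun _ => iSup_le fun hx => (hx.sub_const c).sum_le_pVar p g

section Integral

variable {α : Type*} [MeasurableSpace α]

theorem ofReal_abs_integral_rpow_le {μ : Measure α} [IsProbabilityMeasure μ] {p : ℝ} (hp : 1 ≤ p)
    {f : α → ℝ} (hf : AEStronglyMeasurable f μ) :
    ENNReal.ofReal |∫ y, f y ∂μ| ^ p ≤ ∫⁻ y, ENNReal.ofReal |f y| ^ p ∂μ := by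
  have hp0 : 0 < p := by linarith
  have hL1_le_Lp : ‖∫ y, f y ∂μ‖ₑ ≤ (∫⁻ y, ‖f y‖ₑ ^ p ∂μ) ^ (1 / p) :=
    calc ‖∫ y, f y ∂μ‖ₑ ≤ ∫⁻ y, ‖f y‖ₑ ∂μ := enorm_integral_le_lintegral_enorm f
      _ = eLpNorm f 1 μ := eLpNorm_one_eq_lintegral_enorm.symm
      _ ≤ eLpNorm f (ENNReal.ofReal p) μ :=
        eLpNorm_le_eLpNorm_of_exponent_le (by simpa using hp) hf
      _ = (∫⁻ y, ‖f y‖ₑ ^ p ∂μ) ^ (1 / p) := by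
        rw [eLpNorm_eq_lintegral_rpow_enorm_toReal (by simpa using hp0) ENNReal.ofReal_ne_top,
          ENNReal.toReal_ofReal hp0.le]
  simp_rw [← Real.enorm_eq_ofReal_abs]
  calc ‖∫ y, f y ∂μ‖ₑ ^ p ≤ ((∫⁻ y, ‖f y‖ₑ ^ p ∂μ) ^ (1 / p)) ^ p :=
        ENNReal.rpow_le_rpow hL1_le_Lp hp0.le
    _ = ∫⁻ y, ‖f y‖ₑ ^ p ∂μ := by
        rw [← ENNReal.rpow_mul, one_div_mul_cancel hp0.ne', ENNReal.rpow_one]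

theorem pVar_integral_le {μ : Measure α} [IsProbabilityMeasure μ] {p a b : ℝ} (hp : 1 ≤ p)
    {F : ℝ → α → ℝ} (hF : ∀ x, Integrable (F x) μ) {C : ℝ≥0∞}
    (hC : ∀ᵐ y ∂μ, pVar p a b (fun x => F x y) ≤ C) :
    pVar p a b (fun x => ∫ y, F x y ∂μ) ≤ C := by
  refine iSup_le fun n => iSup_le fun x => iSup_le fun hx => ?_
  have hinc : ∀ i : Fin n, Integrable (fun y => F (x i.succ) y - F (x i.castSucc) y) μ :=
    fun i => (hF _).sub (hF _)
  calc ∑ i : Fin n,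
        ENNReal.ofReal |∫ y, F (x i.succ) y ∂μ - ∫ y, F (x i.castSucc) y ∂μ| ^ p
      = ∑ i : Fin n, ENNReal.ofReal |∫ y, (F (x i.succ) y - F (x i.castSucc) y) ∂μ| ^ p := by
        simp_rw [integral_sub (hF _) (hF _)]
    _ ≤ ∑ i : Fin n, ∫⁻ y, ENNReal.ofReal |F (x i.succ) y - F (x i.castSucc) y| ^ p ∂μ :=
        sum_le_sum fun i _ => ofReal_abs_integral_rpow_le hp (hinc i).aestronglyMeasurable
    _ = ∫⁻ y, ∑ i : Fin n, ENNReal.ofReal |F (x i.succ) y - F (x i.castSucc) y| ^ p ∂μ :=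
        (lintegral_finsetSum' _ fun i _ =>
          ((hinc i).aemeasurable.abs.ennreal_ofReal).pow_const p).symm
    _ ≤ ∫⁻ _, C ∂μ := lintegral_mono_ae (hC.mono fun y hy => (hx.sum_le_pVar p _).trans hy)
    _ = C := by simp

variable {ν : Measure α} {ρ : α → ℝ}

theorem integral_withDensity_ofReal (hρm : AEMeasurable ρ ν) (hρ0 : 0 ≤ᵐ[ν] ρ) (f : α → ℝ) :
    ∫ y, f y ∂ν.withDensity (fun y => ENNReal.ofReal (ρ y)) = ∫ y, ρ y * f y ∂ν := by
  rw [integral_withDensity_eq_integral_toReal_smul₀ hρm.ennreal_ofReal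
    (ae_of_all _ fun _ => ENNReal.ofReal_lt_top)]
  refine integral_congr_ae (hρ0.mono fun y hy => ?_)
  simp [ENNReal.toReal_ofReal hy]

theorem integrable_withDensity_ofReal_iff (hρm : AEMeasurable ρ ν) (hρ0 : 0 ≤ᵐ[ν] ρ)
    {f : α → ℝ} :
    Integrable f (ν.withDensity fun y => ENNReal.ofReal (ρ y)) ↔
      Integrable (fun y => ρ y * f y) ν := by
  rw [integrable_withDensity_iff_integrable_smul₀' hρm.ennreal_ofReal
    (ae_of_all _ fun _ => ENNReal.ofReal_lt_top)]
  refine integrable_congr (hρ0.mono fun y hy => ?_)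
  simp [ENNReal.toReal_ofReal hy]

theorem isProbabilityMeasure_withDensity_ofReal (hρ : Integrable ρ ν) (hρ0 : 0 ≤ᵐ[ν] ρ)
    (h1 : ∫ y, ρ y ∂ν = 1) :
    IsProbabilityMeasure (ν.withDensity fun y => ENNReal.ofReal (ρ y)) :=
  ⟨by rw [withDensity_apply _ MeasurableSet.univ, Measure.restrict_univ,
    ← ofReal_integral_eq_lintegral_ofReal hρ hρ0, h1, ENNReal.ofReal_one]⟩

end Integral

theorem stmt5_general (p : ℝ) (hp : 1 ≤ p) (g : ℝ → ℝ)
    (ρ : ℝ → ℝ) (hρ0 : ∀ x, 0 ≤ ρ x)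
    (hρs : Function.support ρ ⊆ Set.Icc 0 2) (hρi : ∫ x, ρ x = 1)
    (hint : ∀ (n : ℕ) (x : ℝ),
      MeasureTheory.IntegrableOn (fun y => ρ y * g (x - y / n)) (Set.Icc 0 2)) :
    ∀ M > (0:ℝ), ∀ n : ℕ, 1 ≤ n →
      (pVar p (-M) M (fun x => ∫ y in Set.Icc (0:ℝ) 2, ρ y * g (x - y / n))) ^ (1 / p) ≤
        (pVar p (-M - 2) M g) ^ (1 / p) := by
  intro M _ n hn
  set μ := (volume.restrict (Icc (0 : ℝ) 2)).withDensity fun y => ENNReal.ofReal (ρ y)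
  have hρ : IntegrableOn ρ (Icc 0 2) := (integrable_of_integral_eq_one hρi).integrableOn
  have hρ0' : 0 ≤ᵐ[volume.restrict (Icc (0 : ℝ) 2)] ρ := ae_of_all _ hρ0
  have hρi' : ∫ y in Icc 0 2, ρ y = 1 := by
    rwa [setIntegral_eq_integral_of_forall_compl_eq_zero fun y hy =>
      Function.notMem_support.1 fun h => hy (hρs h)]
  have : IsProbabilityMeasure μ := isProbabilityMeasure_withDensity_ofReal hρ hρ0' hρi'
  simp_rw [← integral_withDensity_ofReal hρ.aemeasurable hρ0']
  gcongr
  refine pVar_integral_le hp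
    (fun x => (integrable_withDensity_ofReal_iff hρ.aemeasurable hρ0').2 (hint n x)) ?_
  have hμ : ∀ᵐ y ∂μ, y ∈ Icc (0 : ℝ) 2 :=
    (withDensity_absolutelyContinuous _ _).ae_le (ae_restrict_mem measurableSet_Icc)
  filter_upwards [hμ] with y ⟨hy0, hy2⟩
  have hyn : 0 ≤ y / n ∧ y / n ≤ 2 :=
    ⟨div_nonneg hy0 n.cast_nonneg, (div_le_self hy0 (by exact_mod_cast hn)).trans hy2⟩
  calc pVar p (-M) M (fun x => g (x - y / n)) ≤ pVar p (-M - y / n) (M - y / n) g :=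
        pVar_comp_sub_const_le p (-M) M (y / n) g
    _ ≤ pVar p (-M - 2) M g := pVar_mono (by linarith) (by linarith)

/-- Mollification does not increase the `p`-variation: if `gₙ x = ∫₀² ρ(y) g(x - y/n) dy`
with `ρ ≥ 0` supported in `[0,2]`, `∫ρ = 1`, then
`‖gₙ‖_{[-M,M];p} ≤ ‖g‖_{[-M-2,M];p}` for every `M > 0` and `n ≥ 1`. -/
theorem stmt5 (p : ℝ) (hp : 1 ≤ p) (g : ℝ → ℝ) (hg : Measurable g)
    (hgv : ∀ Q > (0:ℝ), pVar p (-Q) Q g ≠ ⊤)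
    (ρ : ℝ → ℝ) (hρm : Measurable ρ) (hρ0 : ∀ x, 0 ≤ ρ x)
    (hρs : Function.support ρ ⊆ Set.Icc 0 2) (hρi : ∫ x, ρ x = 1)
    (hint : ∀ (n : ℕ) (x : ℝ),
      MeasureTheory.IntegrableOn (fun y => ρ y * g (x - y / n)) (Set.Icc 0 2)) :
    ∀ M > (0:ℝ), ∀ n : ℕ, 1 ≤ n →
      (pVar p (-M) M (fun x => ∫ y in Set.Icc (0:ℝ) 2, ρ y * g (x - y / n))) ^ (1 / p) ≤
        (pVar p (-M - 2) M g) ^ (1 / p) :=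
  stmt5_general p hp g ρ hρ0 hρs hρi hint
end

section
/- Let $g_n, g : [0,T] \times [-M,M] \to \mathbb{R}$ with $\sup_{(t,x)} |g_n(t,x) - g(t,x)| \to 0$ as $n \to \infty$, and suppose all $g_n$ and $g$ satisfy a common bound $LV^{a,b}(g_n) \le K$ and $LV^{a,b}(g) \le K$ for some $a, b \ge 1$, $K < \infty$. Then for any $a' > a$ and $b' = (a'/a)b$, $LV^{a',b'}(g_n - g) \to 0$ as $n \to \infty$. -/
open Set Finset Filter MeasureTheory
open scoped ENNReal NNReal

/-!
On a fixed grid, every rectangular increment of `f = gₙ - g` is at most `4 sup |f|`, so raising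
the inner exponent from `a` to `a'` costs at most a factor `(4 sup |f|)^(a' - a)` per term. With
`b' = (a'/a) b` the outer exponent adapts so that this yields the interpolation inequality
`LV^{a',b'}(f) ≤ (4 sup |f|)^((a'-a)/a') · LV^{a,b}(f)^(a/a')`. The second factor stays bounded by
`(2K)^(a/a')` by Minkowski's inequality (applied to the inner and then to the outer sum), and the
first tends to zero by uniform convergence.
-/

noncomputable section

def mixedLpNorm {n m : ℕ} (r s : ℝ) (w : Fin n → Fin m → ℝ≥0∞) : ℝ≥0∞ :=
  (∑ j, (∑ i, w i j ^ r) ^ (s / r)) ^ (1 / s)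

def gridIncrements {n m : ℕ} (f : ℝ → ℝ → ℝ) (t : Fin (n + 1) → ℝ) (x : Fin (m + 1) → ℝ) :
    Fin n → Fin m → ℝ≥0∞ :=
  fun i j => ENNReal.ofReal |rectInc f (t i.succ) (t i.castSucc) (x j.succ) (x j.castSucc)|

end

section MixedLpNorm

variable {n m : ℕ} {r s : ℝ}

lemma mixedLpNorm_mono (hr : 0 ≤ r) (hs : 0 ≤ s) {u v : Fin n → Fin m → ℝ≥0∞} (huv : u ≤ v) :
    mixedLpNorm r s u ≤ mixedLpNorm r s v := by
  unfold mixedLpNorm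
  gcongr with j _ i _
  exact huv i j

lemma mixedLpNorm_eq_rowNorm (w : Fin n → Fin m → ℝ≥0∞) :
    mixedLpNorm r s w = (∑ j, ((∑ i, w i j ^ r) ^ (1 / r)) ^ s) ^ (1 / s) := by
  simp only [mixedLpNorm, ← ENNReal.rpow_mul, one_div_mul_eq_div]

lemma mixedLpNorm_add_le (hr : 1 ≤ r) (hs : 1 ≤ s) (u v : Fin n → Fin m → ℝ≥0∞) :
    mixedLpNorm r s (u + v) ≤ mixedLpNorm r s u + mixedLpNorm r s v := by
  simp only [mixedLpNorm_eq_rowNorm]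
  calc (∑ j, ((∑ i, (u + v) i j ^ r) ^ (1 / r)) ^ s) ^ (1 / s)
      ≤ (∑ j, ((∑ i, u i j ^ r) ^ (1 / r) + (∑ i, v i j ^ r) ^ (1 / r)) ^ s) ^ (1 / s) := by
        gcongr with j _
        exact ENNReal.Lp_add_le _ _ _ hr
    _ ≤ _ := ENNReal.Lp_add_le _ _ _ hs

lemma mixedLpNorm_le_of_le {a b a' : ℝ} (ha : 0 < a) (hb : 0 < b) (haa' : a ≤ a')
    {w : Fin n → Fin m → ℝ≥0∞} {η : ℝ≥0∞} (hw : ∀ i j, w i j ≤ η) :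
    mixedLpNorm a' (a' / a * b) w ≤ η ^ ((a' - a) / a') * mixedLpNorm a b w ^ (a / a') := by
  have ha' : 0 < a' := ha.trans_le haa'
  have hrow : ∀ j, ∑ i, w i j ^ a' ≤ η ^ (a' - a) * ∑ i, w i j ^ a := fun j => by
    rw [Finset.mul_sum]
    gcongr with i _
    calc w i j ^ a' = w i j ^ (a' - a) * w i j ^ a := by
          rw [← ENNReal.rpow_add_of_nonneg _ _ (by linarith) ha.le, sub_add_cancel]
      _ ≤ η ^ (a' - a) * w i j ^ a := by gcongr; exact hw i j
  have hexp : a' / a * b / a' = b / a := by field_simp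
  calc mixedLpNorm a' (a' / a * b) w
      ≤ (∑ j, (η ^ (a' - a) * ∑ i, w i j ^ a) ^ (b / a)) ^ (1 / (a' / a * b)) := by
        unfold mixedLpNorm
        rw [hexp]
        gcongr with j _
        exact hrow j
    _ = η ^ ((a' - a) / a') * mixedLpNorm a b w ^ (a / a') := by
        simp only [ENNReal.mul_rpow_of_nonneg _ _ (by positivity : 0 ≤ b / a), ← Finset.mul_sum,
          ENNReal.mul_rpow_of_nonneg _ _ (by positivity : 0 ≤ 1 / (a' / a * b)), mixedLpNorm,
          ← ENNReal.rpow_mul]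
        congr 2 <;> field_simp

end MixedLpNorm

lemma IsPartition.mem_Icc_s11 {n : ℕ} {c d : ℝ} {t : Fin (n + 1) → ℝ} (h : IsPartition c d t)
    (i : Fin (n + 1)) : t i ∈ Set.Icc c d :=
  ⟨h.2.1 ▸ h.1 (Fin.zero_le i), h.2.2 ▸ h.1 (Fin.le_last i)⟩

lemma rectInc_sub (f g : ℝ → ℝ → ℝ) (t s x y : ℝ) :
    rectInc (fun t x => f t x - g t x) t s x y = rectInc f t s x y - rectInc g t s x y := by
  simp only [rectInc]
  ring

lemma abs_rectInc_le {f : ℝ → ℝ → ℝ} {η : ℝ} {A B : Set ℝ}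
    (hf : ∀ t ∈ A, ∀ x ∈ B, |f t x| ≤ η) {t s x y : ℝ} (ht : t ∈ A) (hs : s ∈ A) (hx : x ∈ B)
    (hy : y ∈ B) : |rectInc f t s x y| ≤ 4 * η := by
  have h₁ := abs_le.mp (hf t ht x hx)
  have h₂ := abs_le.mp (hf t ht y hy)
  have h₃ := abs_le.mp (hf s hs x hx)
  have h₄ := abs_le.mp (hf s hs y hy)
  rw [rectInc, abs_le]
  constructor <;> linarith

section LV

variable {r s t₀ t₁ x₀ x₁ : ℝ}

lemma mixedLpNorm_le_LV {n m : ℕ} {t : Fin (n + 1) → ℝ} {x : Fin (m + 1) → ℝ}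
    (ht : IsPartition t₀ t₁ t) (hx : IsPartition x₀ x₁ x) (f : ℝ → ℝ → ℝ) :
    mixedLpNorm r s (gridIncrements f t x) ≤ LV r s t₀ t₁ x₀ x₁ f :=
  le_iSup_of_le n <| le_iSup_of_le m <| le_iSup_of_le t <| le_iSup_of_le x <|
    le_iSup_of_le ht <| le_iSup_of_le hx le_rfl

lemma LV_le_iff {f : ℝ → ℝ → ℝ} {C : ℝ≥0∞} :
    LV r s t₀ t₁ x₀ x₁ f ≤ C ↔ ∀ (n m : ℕ) (t : Fin (n + 1) → ℝ) (x : Fin (m + 1) → ℝ),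
      IsPartition t₀ t₁ t → IsPartition x₀ x₁ x → mixedLpNorm r s (gridIncrements f t x) ≤ C := by
  simp only [LV, iSup_le_iff]
  rfl

lemma LV_sub_le (hr : 1 ≤ r) (hs : 1 ≤ s) (f g : ℝ → ℝ → ℝ) :
    LV r s t₀ t₁ x₀ x₁ (fun t x => f t x - g t x) ≤
      LV r s t₀ t₁ x₀ x₁ f + LV r s t₀ t₁ x₀ x₁ g := by
  refine LV_le_iff.mpr fun n m t x ht hx => ?_
  have hinc : gridIncrements (fun t x => f t x - g t x) t x ≤
      gridIncrements f t x + gridIncrements g t x := fun i j => by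
    simp only [gridIncrements, Pi.add_apply, rectInc_sub,
      ← ENNReal.ofReal_add (abs_nonneg _) (abs_nonneg _)]
    exact ENNReal.ofReal_le_ofReal (abs_sub _ _)
  calc mixedLpNorm r s (gridIncrements (fun t x => f t x - g t x) t x)
      ≤ mixedLpNorm r s (gridIncrements f t x + gridIncrements g t x) :=
        mixedLpNorm_mono (by linarith) (by linarith) hinc
    _ ≤ _ := mixedLpNorm_add_le hr hs _ _
    _ ≤ _ := add_le_add (mixedLpNorm_le_LV ht hx f) (mixedLpNorm_le_LV ht hx g)

lemma LV_le_of_abs_le {a b a' η : ℝ} (ha : 0 < a) (hb : 0 < b) (haa' : a ≤ a')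
    {f : ℝ → ℝ → ℝ} (hf : ∀ t ∈ Set.Icc t₀ t₁, ∀ x ∈ Set.Icc x₀ x₁, |f t x| ≤ η) :
    LV a' (a' / a * b) t₀ t₁ x₀ x₁ f ≤
      ENNReal.ofReal (4 * η) ^ ((a' - a) / a') * LV a b t₀ t₁ x₀ x₁ f ^ (a / a') := by
  refine LV_le_iff.mpr fun n m t x ht hx => ?_
  have hinc : ∀ i j, gridIncrements f t x i j ≤ ENNReal.ofReal (4 * η) := fun i j =>
    ENNReal.ofReal_le_ofReal <|
      abs_rectInc_le hf (ht.mem_Icc_s11 _) (ht.mem_Icc_s11 _) (hx.mem_Icc_s11 _) (hx.mem_Icc_s11 _)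
  calc mixedLpNorm a' (a' / a * b) (gridIncrements f t x)
      ≤ _ := mixedLpNorm_le_of_le ha hb haa' hinc
    _ ≤ _ := by
        gcongr
        · exact div_nonneg ha.le (ha.trans_le haa').le
        · exact mixedLpNorm_le_LV ht hx f

end LV

lemma ENNReal.tendsto_nhds_zero_of_eventually_le {ι : Type*} {l : Filter ι} {u : ι → ℝ≥0∞}
    {φ : ℝ → ℝ≥0∞} (hφ : Tendsto φ (nhdsWithin 0 (Set.Ioi 0)) (nhds 0))
    (hu : ∀ ε > 0, ∀ᶠ n in l, u n ≤ φ ε) : Tendsto u l (nhds 0) := by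
  refine ENNReal.tendsto_nhds_zero.mpr fun δ hδ => ?_
  obtain ⟨ε, hφε, hε⟩ := ((hφ.eventually (ge_mem_nhds hδ)).and self_mem_nhdsWithin).exists
  exact (hu ε hε).mono fun n hn => hn.trans hφε

theorem stmt11_general (T M a b K : ℝ) (ha : 1 ≤ a) (hb : 1 ≤ b)
    (g : ℕ → ℝ → ℝ → ℝ) (g₀ : ℝ → ℝ → ℝ)
    (hunif : ∀ ε > (0:ℝ), ∃ N : ℕ, ∀ n ≥ N, ∀ t ∈ Set.Icc (0:ℝ) T, ∀ x ∈ Set.Icc (-M) M,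
      |g n t x - g₀ t x| ≤ ε)
    (hgK : ∀ n, LV a b 0 T (-M) M (g n) ≤ ENNReal.ofReal K)
    (hg₀K : LV a b 0 T (-M) M g₀ ≤ ENNReal.ofReal K) :
    ∀ a' b' : ℝ, a < a' → b' = (a' / a) * b →
      Filter.Tendsto (fun n => LV a' b' 0 T (-M) M fun t x => g n t x - g₀ t x)
        Filter.atTop (nhds 0) := by
  rintro a' _ haa' rfl
  have hθ : 0 < (a' - a) / a' := div_pos (by linarith) (by linarith)
  have hexp : 0 ≤ a / a' := div_nonneg (by linarith) (by linarith)
  have hLV : ∀ n, LV a b 0 T (-M) M (fun t x => g n t x - g₀ t x) ≤ 2 * ENNReal.ofReal K :=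
    fun n => (LV_sub_le ha hb _ _).trans <| (add_le_add (hgK n) hg₀K).trans_eq (two_mul _).symm
  refine ENNReal.tendsto_nhds_zero_of_eventually_le
    (φ := fun η => ENNReal.ofReal (4 * η) ^ ((a' - a) / a') * (2 * ENNReal.ofReal K) ^ (a / a'))
    ?_ fun ε hε => ?_
  · refine tendsto_nhdsWithin_of_tendsto_nhds ?_
    have hcont : Continuous fun η : ℝ =>
        ENNReal.ofReal (4 * η) ^ ((a' - a) / a') * (2 * ENNReal.ofReal K) ^ (a / a') :=
      ENNReal.continuous_mul_const (ENNReal.rpow_ne_top_of_nonneg hexp (by finiteness))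
        |>.comp <| ENNReal.continuous_rpow_const.comp <|
          ENNReal.continuous_ofReal.comp (continuous_const_mul 4)
    simpa [ENNReal.zero_rpow_of_pos hθ] using hcont.tendsto 0
  · obtain ⟨N, hN⟩ := hunif ε hε
    filter_upwards [eventually_ge_atTop N] with n hn
    calc LV a' (a' / a * b) 0 T (-M) M (fun t x => g n t x - g₀ t x)
        ≤ _ := LV_le_of_abs_le (by linarith) (by linarith) haa'.le (hN n hn)
      _ ≤ _ := by gcongr; exact hLV n

/-- Uniform convergence plus a common `LV^{a,b}` bound imply convergence in the interpolated
joint left variation: `LV^{a',b'}(gₙ - g) → 0` for `a' > a`, `b' = (a'/a)·b`. -/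
theorem stmt11 (T M a b K : ℝ) (hT : 0 < T) (hM : 0 < M) (ha : 1 ≤ a) (hb : 1 ≤ b)
    (g : ℕ → ℝ → ℝ → ℝ) (g₀ : ℝ → ℝ → ℝ)
    (hunif : ∀ ε > (0:ℝ), ∃ N : ℕ, ∀ n ≥ N, ∀ t ∈ Set.Icc (0:ℝ) T, ∀ x ∈ Set.Icc (-M) M,
      |g n t x - g₀ t x| ≤ ε)
    (hgK : ∀ n, LV a b 0 T (-M) M (g n) ≤ ENNReal.ofReal K)
    (hg₀K : LV a b 0 T (-M) M g₀ ≤ ENNReal.ofReal K) :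
    ∀ a' b' : ℝ, a < a' → b' = (a' / a) * b →
      Filter.Tendsto (fun n => LV a' b' 0 T (-M) M fun t x => g n t x - g₀ t x)
        Filter.atTop (nhds 0) :=
  stmt11_general T M a b K ha hb g g₀ hunif hgK hg₀K
end

section
/- Let $g : [A,B] \to \mathbb{R}$ be continuous and $f_n \to f$ pointwise with uniform convergence $\sup_{x} |f_n(x) - f(x)| \to 0$, where all $f_n$ satisfy a uniform $p$-variation bound $\|f_n\|_{[A,B];p} \le K$ and $g$ has finite $q$-variation with $1/p + 1/q > 1$. Then the Young integrals converge: $\int_A^B g(x) \, d f_n(x) \to \int_A^B g(x) \, d f(x)$ as $n \to \infty$. -/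
open Set Finset Filter MeasureTheory
open scoped ENNReal NNReal

/-- `I` is the Young integral `∫_A^B g df`, defined as the limit of left-point
Riemann–Stieltjes sums along partitions of vanishing mesh. -/
def IsYoungIntegral (g f : ℝ → ℝ) (A B I : ℝ) : Prop :=
  ∀ ε > (0:ℝ), ∃ δ > (0:ℝ), ∀ (n : ℕ) (x : Fin (n + 1) → ℝ), IsPartition A B x →
    (∀ i : Fin n, x i.succ - x i.castSucc < δ) →
    |(∑ i : Fin n, g (x i.castSucc) * (f (x i.succ) - f (x i.castSucc))) - I| < ε

/-!
The Young–Loève estimate: if `1/q + 1/p' > 1`, every Riemann–Stieltjes sum of `g` against `h` over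
a partition of `[A, B]` differs from `g A * (h B - h A)` by at most `C ‖g‖_q ‖h‖_{p'}`, with `C`
depending only on `1/q + 1/p'`. Choose `p' > p` with `1/q + 1/p' > 1` still. If `|fₙ - f| ≤ t` on
`[A, B]`, then `|Δ(fₙ - f)| ^ p' ≤ (2 t) ^ (p' - p) |Δ(fₙ - f)| ^ p`, so the uniform `p`-variation
bound makes `‖fₙ - f‖_{p'}` small, and `|(fₙ - f) B - (fₙ - f) A| ≤ 2 t`. Hence every Riemann sum of
`g` against `fₙ - f`, and therefore `Iₙ - I`, is small.
-/

theorem Real.rpow_add_le_mul_rpow_add_rpow {a b p : ℝ} (ha : 0 ≤ a) (hb : 0 ≤ b) (hp : 1 ≤ p) :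
    (a + b) ^ p ≤ 2 ^ (p - 1) * (a ^ p + b ^ p) := by
  exact_mod_cast NNReal.coe_le_coe.mpr (NNReal.rpow_add_le_mul_rpow_add_rpow ⟨a, ha⟩ ⟨b, hb⟩ hp)

theorem Real.rpow_le_rpow_sub_mul_rpow {a t p p' : ℝ} (ha : 0 ≤ a) (hat : a ≤ t)
    (hp' : 0 < p') (hpp' : p ≤ p') : a ^ p' ≤ t ^ (p' - p) * a ^ p := by
  calc a ^ p' = a ^ (p' - p) * a ^ p := by rw [← Real.rpow_add' ha (by linarith), sub_add_cancel]
    _ ≤ t ^ (p' - p) * a ^ p := by gcongr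

def rsSum (g h : ℝ → ℝ) (x : ℕ → ℝ) (m : ℕ) : ℝ :=
  ∑ i ∈ range m, g (x i) * (h (x (i + 1)) - h (x i))

def skipAt (j i : ℕ) : ℕ := if i < j then i else i + 1

theorem skipAt_of_lt {j i : ℕ} (h : i < j) : skipAt j i = i := if_pos h

theorem skipAt_of_le {j i : ℕ} (h : j ≤ i) : skipAt j i = i + 1 := if_neg (not_lt.mpr h)

theorem monotone_skipAt (j : ℕ) : Monotone (skipAt j) := by
  intro a b hab
  simp only [skipAt]
  split_ifs <;> omega

theorem rsSum_succ_eq_rsSum_skipAt (g h : ℝ → ℝ) (x : ℕ → ℝ) {j m : ℕ} (hj : j < m) :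
    rsSum g h x (m + 1) = rsSum g h (x ∘ skipAt (j + 1)) m +
      (g (x (j + 1)) - g (x j)) * (h (x (j + 2)) - h (x (j + 1))) := by
  obtain ⟨r, rfl⟩ : ∃ r, m = j + 1 + r := ⟨m - (j + 1), by omega⟩
  clear hj
  induction r with
  | zero =>
    have hlow : rsSum g h (x ∘ skipAt (j + 1)) j = rsSum g h x j :=
      sum_congr rfl fun i hi => by
        have := mem_range.mp hi
        simp only [Function.comp, skipAt_of_lt (show i < j + 1 by omega),
          skipAt_of_lt (show i + 1 < j + 1 by omega)]
    simp only [rsSum] at hlow ⊢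
    rw [sum_range_succ, sum_range_succ, add_zero, sum_range_succ, hlow]
    simp only [Function.comp, skipAt_of_lt (lt_add_one j), skipAt_of_le (le_refl (j + 1))]
    ring
  | succ r ih =>
    rw [← add_assoc, rsSum, sum_range_succ, ← rsSum, ih, rsSum, rsSum, sum_range_succ]
    simp only [Function.comp, skipAt_of_le (show j + 1 ≤ j + 1 + r by omega),
      skipAt_of_le (show j + 1 ≤ j + 1 + r + 1 by omega)]
    ring

theorem exists_le_two_mul_div {N : ℕ} (hN : 0 < N) {a b : ℕ → ℝ} (ha : ∀ i, 0 ≤ a i)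
    (hb : ∀ i, 0 ≤ b i) {G H : ℝ} (hG : ∑ i ∈ range N, a i ≤ G) (hH : ∑ i ∈ range N, b i ≤ H) :
    ∃ j < N, a j ≤ 2 * G / N ∧ b j ≤ 2 * H / N := by
  have hN' : (0 : ℝ) < N := Nat.cast_pos.mpr hN
  have key : ∀ {c : ℕ → ℝ} {C : ℝ}, (∀ i, 0 ≤ c i) → ∑ i ∈ range N, c i ≤ C →
      ∀ j < N, c j / C ≤ 2 / N → c j ≤ 2 * C / N := by
    intro c C hc hC j hj hjC
    rcases (sum_nonneg fun i _ => hc i).trans hC |>.eq_or_lt with hC0 | hC0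
    · subst hC0
      simpa using (single_le_sum (fun i _ => hc i) (mem_range.mpr hj)).trans hC
    · rw [div_le_iff₀ hC0] at hjC
      exact hjC.trans_eq (by ring)
  have hsum : ∑ i ∈ range N, (a i / G + b i / H) ≤ ∑ _i ∈ range N, 2 / (N : ℝ) := by
    rw [sum_add_distrib, ← sum_div, ← sum_div, sum_const, card_range, nsmul_eq_mul,
      mul_div_cancel₀ _ hN'.ne']
    have h1 := div_le_one_of_le₀ hG ((sum_nonneg fun i _ => ha i).trans hG)
    have h2 := div_le_one_of_le₀ hH ((sum_nonneg fun i _ => hb i).trans hH)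
    linarith
  obtain ⟨j, hj, hjle⟩ := exists_le_of_sum_le (nonempty_range_iff.mpr hN.ne') hsum
  have hj := mem_range.mp hj
  have := div_nonneg (ha j) ((sum_nonneg fun i _ => ha i).trans hG)
  have := div_nonneg (hb j) ((sum_nonneg fun i _ => hb i).trans hH)
  exact ⟨j, hj, key ha hG j hj (by linarith), key hb hH j hj (by linarith)⟩

theorem summable_two_div_nat_rpow {θ : ℝ} (hθ : 1 < θ) : Summable fun k : ℕ => (2 / k : ℝ) ^ θ := by
  have h := (Real.summable_one_div_nat_rpow.mpr hθ).mul_left (2 ^ θ)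
  refine h.congr fun k => ?_
  rw [Real.div_rpow zero_le_two (Nat.cast_nonneg k), mul_one_div]

theorem Fin.sum_eq_rsSum_clamp (g h : ℝ → ℝ) {n : ℕ} (x : Fin (n + 1) → ℝ) :
    ∑ i : Fin n, g (x i.castSucc) * (h (x i.succ) - h (x i.castSucc)) =
      rsSum g h (fun k => x (Fin.clamp k n)) n := by
  rw [rsSum, ← Fin.sum_univ_eq_sum_range]
  refine sum_congr rfl fun i _ => ?_
  have h1 : Fin.clamp i n = i.castSucc := Fin.ext (by simp [Fin.clamp, i.isLt.le])
  have h2 : Fin.clamp (i + 1) n = i.succ := Fin.ext (by simp [Fin.clamp, i.isLt])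
  rw [h1, h2]

/-- Unlike in `pVar`, the chains need not start at `A` nor end at `B`, so that subchains of
admissible chains are admissible. -/
def PVarBound (p A B : ℝ) (φ : ℝ → ℝ) (C : ℝ) : Prop :=
  ∀ x : ℕ → ℝ, Monotone x → (∀ k, x k ∈ Icc A B) →
    ∀ N, ∑ i ∈ range N, |φ (x (i + 1)) - φ (x i)| ^ p ≤ C

namespace PVarBound

variable {p p' q A B C C' G H : ℝ} {φ ψ g h : ℝ → ℝ}

theorem nonneg (h : PVarBound p A B φ C) (hAB : A ≤ B) : 0 ≤ C := by
  simpa using h (fun _ => A) monotone_const (fun _ => ⟨le_rfl, hAB⟩) 0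

theorem of_pVar_le (hp : 0 ≤ p) (hC : 0 ≤ C) (h : pVar p A B φ ≤ ENNReal.ofReal C) :
    PVarBound p A B φ C := by
  intro x hx hxI N
  -- the partition `A, x 0, …, x N, B` of `[A, B]`
  set z : ℕ → ℝ := fun k => if k = 0 then A else if k ≤ N + 1 then x (k - 1) else B with hz
  have hz_mono : Monotone z := by
    refine monotone_nat_of_le_succ fun k => ?_
    simp only [hz]
    split_ifs <;> first
      | contradiction | omega | exact le_rfl | exact (hxI _).1 | exact (hxI _).2
      | (apply hx; omega)
  have hpart : IsPartition A B (fun i : Fin (N + 3) => z i) :=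
    ⟨fun i j hij => hz_mono hij, by simp [hz], by simp [hz]⟩
  have hsum : ∑ i ∈ range N, |φ (x (i + 1)) - φ (x i)| ^ p ≤
      ∑ k ∈ range (N + 2), |φ (z (k + 1)) - φ (z k)| ^ p := by
    rw [sum_range_succ', sum_range_succ]
    have hzx : ∀ i ∈ range N, |φ (x (i + 1)) - φ (x i)| ^ p =
        |φ (z (i + 1 + 1)) - φ (z (i + 1))| ^ p := by
      intro i hi
      have := mem_range.mp hi
      simp only [hz, if_neg (Nat.succ_ne_zero _), if_pos (show i + 1 + 1 ≤ N + 1 by omega),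
        if_pos (show i + 1 ≤ N + 1 by omega), Nat.add_sub_cancel]
    rw [sum_congr rfl hzx]
    have := Real.rpow_nonneg (abs_nonneg (φ (z (N + 1 + 1)) - φ (z (N + 1)))) p
    have := Real.rpow_nonneg (abs_nonneg (φ (z (0 + 1)) - φ (z 0))) p
    linarith
  have hle : ENNReal.ofReal (∑ k ∈ range (N + 2), |φ (z (k + 1)) - φ (z k)| ^ p) ≤
      pVar p A B φ := by
    refine le_iSup_of_le (N + 2) (le_iSup_of_le _ (le_iSup_of_le hpart (le_of_eq ?_)))
    rw [ENNReal.ofReal_sum_of_nonneg (fun _ _ => by positivity),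
      ← Fin.sum_univ_eq_sum_range (fun k => ENNReal.ofReal (|φ (z (k + 1)) - φ (z k)| ^ p))]
    exact sum_congr rfl fun i _ => (ENNReal.ofReal_rpow_of_nonneg (abs_nonneg _) hp).symm
  exact hsum.trans ((ENNReal.ofReal_le_ofReal_iff hC).mp (hle.trans h))

theorem sub (hp : 1 ≤ p) (hφ : PVarBound p A B φ C) (hψ : PVarBound p A B ψ C') :
    PVarBound p A B (φ - ψ) (2 ^ (p - 1) * (C + C')) := by
  intro x hx hxI N
  calc ∑ i ∈ range N, |(φ - ψ) (x (i + 1)) - (φ - ψ) (x i)| ^ p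
      ≤ ∑ i ∈ range N, 2 ^ (p - 1) *
          (|φ (x (i + 1)) - φ (x i)| ^ p + |ψ (x (i + 1)) - ψ (x i)| ^ p) := by
        refine sum_le_sum fun i _ => ?_
        have htri : |(φ - ψ) (x (i + 1)) - (φ - ψ) (x i)| ≤
            |φ (x (i + 1)) - φ (x i)| + |ψ (x (i + 1)) - ψ (x i)| := by
          simpa only [Pi.sub_apply, sub_sub_sub_comm] using abs_sub _ _
        exact (Real.rpow_le_rpow (abs_nonneg _) htri (by linarith)).trans
          (Real.rpow_add_le_mul_rpow_add_rpow (abs_nonneg _) (abs_nonneg _) hp)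
    _ ≤ 2 ^ (p - 1) * (C + C') := by
        rw [← mul_sum, sum_add_distrib]
        gcongr
        exacts [hφ x hx hxI N, hψ x hx hxI N]

theorem of_abs_sub_le (hp' : 0 < p') (hpp' : p ≤ p') (hφ : PVarBound p A B φ C) {s : ℝ}
    (hs : ∀ y ∈ Icc A B, ∀ z ∈ Icc A B, |φ y - φ z| ≤ s) :
    PVarBound p' A B φ (s ^ (p' - p) * C) := by
  intro x hx hxI N
  have hs0 : 0 ≤ s := (abs_nonneg _).trans (hs _ (hxI 0) _ (hxI 0))
  calc ∑ i ∈ range N, |φ (x (i + 1)) - φ (x i)| ^ p'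
      ≤ ∑ i ∈ range N, s ^ (p' - p) * |φ (x (i + 1)) - φ (x i)| ^ p :=
        sum_le_sum fun i _ => Real.rpow_le_rpow_sub_mul_rpow (abs_nonneg _)
          (hs _ (hxI (i + 1)) _ (hxI i)) hp' hpp'
    _ ≤ s ^ (p' - p) * C := by
        rw [← mul_sum]
        gcongr
        exact hφ x hx hxI N

theorem of_rpow_one_div_le {K : ℝ} (hp : 0 < p) (h : pVar p A B φ ^ (1 / p) ≤ ENNReal.ofReal K) :
    PVarBound p A B φ (max K 0 ^ p) := by
  refine of_pVar_le hp.le (by positivity) ?_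
  rw [← ENNReal.ofReal_rpow_of_nonneg (le_max_right K 0) hp.le, ← ENNReal.rpow_inv_le_iff hp,
    ← one_div]
  exact h.trans (ENNReal.ofReal_le_ofReal (le_max_left K 0))

theorem of_tendsto {f : ℕ → ℝ → ℝ} (hp : 0 ≤ p) (hf : ∀ n, PVarBound p A B (f n) C)
    (hlim : ∀ y ∈ Icc A B, Tendsto (fun n => f n y) atTop (nhds (φ y))) :
    PVarBound p A B φ C := by
  intro x hx hxI N
  have hsum : Tendsto (fun n => ∑ i ∈ range N, |f n (x (i + 1)) - f n (x i)| ^ p) atTop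
      (nhds (∑ i ∈ range N, |φ (x (i + 1)) - φ (x i)| ^ p)) :=
    tendsto_finsetSum _ fun i _ =>
      (((hlim _ (hxI (i + 1))).sub (hlim _ (hxI i))).abs).rpow_const (Or.inr hp)
  exact le_of_tendsto' hsum fun n => hf n x hx hxI N

/-- By pigeonhole, some pair of consecutive increments carries at most twice its share of both
variation budgets. -/
theorem exists_abs_mul_le (hq : 0 < q) (hp : 0 < p) (hg : PVarBound q A B g G)
    (hh : PVarBound p A B h H) {x : ℕ → ℝ} (hx : Monotone x) (hxI : ∀ k, x k ∈ Icc A B)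
    {m : ℕ} (hm : 0 < m) :
    ∃ j < m, |(g (x (j + 1)) - g (x j)) * (h (x (j + 2)) - h (x (j + 1)))| ≤
      G ^ (1 / q) * H ^ (1 / p) * (2 / m) ^ (1 / q + 1 / p) := by
  have hAB : A ≤ B := (hxI 0).1.trans (hxI 0).2
  have hm' : (0 : ℝ) < 2 / m := div_pos two_pos (Nat.cast_pos.mpr hm)
  obtain ⟨j, hj, hgj, hhj⟩ := exists_le_two_mul_div hm
    (a := fun i => |g (x (i + 1)) - g (x i)| ^ q)
    (b := fun i => |h (x (i + 2)) - h (x (i + 1))| ^ p)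
    (fun _ => by positivity) (fun _ => by positivity) (hg x hx hxI m)
    (hh (x ∘ (· + 1)) (hx.comp fun _ _ hab => Nat.add_le_add_right hab 1) (fun _ => hxI _) m)
  rw [mul_div_right_comm] at hgj hhj
  have hG := hg.nonneg hAB
  have hH := hh.nonneg hAB
  refine ⟨j, hj, ?_⟩
  calc |(g (x (j + 1)) - g (x j)) * (h (x (j + 2)) - h (x (j + 1)))|
      = |g (x (j + 1)) - g (x j)| * |h (x (j + 2)) - h (x (j + 1))| := abs_mul _ _
    _ ≤ (2 / m * G) ^ (1 / q) * (2 / m * H) ^ (1 / p) := by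
        rw [one_div, one_div]
        exact mul_le_mul
          ((Real.le_rpow_inv_iff_of_pos (abs_nonneg _) (by positivity) hq).mpr hgj)
          ((Real.le_rpow_inv_iff_of_pos (abs_nonneg _) (by positivity) hp).mpr hhj)
          (abs_nonneg _) (by positivity)
    _ = G ^ (1 / q) * H ^ (1 / p) * (2 / m) ^ (1 / q + 1 / p) := by
        rw [Real.mul_rpow hm'.le hG, Real.mul_rpow hm'.le hH, Real.rpow_add hm']
        ring

/-- The Young–Loève estimate, proved by removing points one at a time. -/
theorem abs_rsSum_sub_le (hq : 0 < q) (hp : 0 < p) (hg : PVarBound q A B g G)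
    (hh : PVarBound p A B h H) (m : ℕ) {x : ℕ → ℝ} (hx : Monotone x) (hxI : ∀ k, x k ∈ Icc A B) :
    |rsSum g h x m - g (x 0) * (h (x m) - h (x 0))| ≤
      G ^ (1 / q) * H ^ (1 / p) * ∑ k ∈ Ico 1 m, (2 / k : ℝ) ^ (1 / q + 1 / p) := by
  induction m generalizing x with
  | zero => simp [rsSum]
  | succ m ih =>
    rcases m.eq_zero_or_pos with rfl | hm
    · simp [rsSum]
    obtain ⟨j, hj, hE⟩ := hg.exists_abs_mul_le hq hp hh hx hxI hm
    have hrem := ih (hx.comp (monotone_skipAt (j + 1))) (fun _ => hxI _)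
    simp only [Function.comp, skipAt_of_lt (Nat.succ_pos j),
      skipAt_of_le (show j + 1 ≤ m by omega)] at hrem
    calc |rsSum g h x (m + 1) - g (x 0) * (h (x (m + 1)) - h (x 0))|
        = |(rsSum g h (x ∘ skipAt (j + 1)) m - g (x 0) * (h (x (m + 1)) - h (x 0))) +
            (g (x (j + 1)) - g (x j)) * (h (x (j + 2)) - h (x (j + 1)))| := by
          rw [rsSum_succ_eq_rsSum_skipAt g h x hj]
          ring_nf
      _ ≤ _ := (abs_add_le _ _).trans (add_le_add hrem hE)
      _ = _ := by rw [sum_Ico_succ_top (by omega : 1 ≤ m)]; ring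

theorem abs_sum_isPartition_le (hq : 0 < q) (hp : 0 < p)
    (hpq : 1 < 1 / q + 1 / p) (hg : PVarBound q A B g G) (hh : PVarBound p A B h H) {n : ℕ}
    {x : Fin (n + 1) → ℝ} (hx : IsPartition A B x) :
    |∑ i : Fin n, g (x i.castSucc) * (h (x i.succ) - h (x i.castSucc))| ≤
      |g A| * |h B - h A| +
        G ^ (1 / q) * H ^ (1 / p) * ∑' k : ℕ, (2 / k : ℝ) ^ (1 / q + 1 / p) := by
  obtain ⟨hmono, hx0, hxn⟩ := hx
  set y : ℕ → ℝ := fun k => x (Fin.clamp k n)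
  have hy : Monotone y := hmono.comp Fin.clamp_monotone
  have hyI : ∀ k, y k ∈ Icc A B := fun k =>
    ⟨hx0 ▸ hmono (Fin.zero_le _), hxn ▸ hmono (Fin.le_last _)⟩
  have hy0 : y 0 = A := by simp [y, ← hx0, Fin.clamp]
  have hyn : y n = B := by simp [y, ← hxn, Fin.clamp_eq_last]
  have hAB : A ≤ B := (hyI 0).1.trans (hyI 0).2
  have hG := hg.nonneg hAB
  have hH := hh.nonneg hAB
  have hYL := (hg.abs_rsSum_sub_le hq hp hh n hy hyI).trans (mul_le_mul_of_nonneg_left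
    ((summable_two_div_nat_rpow hpq).sum_le_tsum _ fun _ _ => by positivity) (by positivity))
  rw [hy0, hyn] at hYL
  rw [Fin.sum_eq_rsSum_clamp, ← sub_add_cancel (rsSum g h y n) (g A * (h B - h A)), add_comm]
  exact (abs_add_le _ _).trans (by rw [abs_mul]; linarith)

end PVarBound

theorem exists_isPartition_forall_sub_lt {A B δ : ℝ} (hAB : A ≤ B) (hδ : 0 < δ) :
    ∃ (n : ℕ) (x : Fin (n + 1) → ℝ),
      IsPartition A B x ∧ ∀ i : Fin n, x i.succ - x i.castSucc < δ := by
  obtain ⟨n, hn⟩ := exists_nat_gt ((B - A) / δ)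
  have hn0 : (0 : ℝ) < n := (div_nonneg (sub_nonneg.mpr hAB) hδ.le).trans_lt hn
  have hstep : 0 ≤ (B - A) / n := div_nonneg (sub_nonneg.mpr hAB) hn0.le
  refine ⟨n, fun i => A + i * ((B - A) / n), ⟨fun i j hij => ?_, by simp, ?_⟩, fun i => ?_⟩
  · dsimp only
    gcongr
    exact Nat.cast_le.mpr hij
  · simp [mul_div_cancel₀ _ hn0.ne']
  · simp only [Fin.val_succ, Fin.val_castSucc, Nat.cast_add, Nat.cast_one]
    rw [add_mul, one_mul, add_sub_add_left_eq_sub, add_sub_cancel_left, div_lt_iff₀ hn0]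
    rwa [div_lt_iff₀ hδ, mul_comm] at hn

namespace IsYoungIntegral

variable {g f f' : ℝ → ℝ} {A B I I' : ℝ}

theorem sub (hf : IsYoungIntegral g f A B I) (hf' : IsYoungIntegral g f' A B I') :
    IsYoungIntegral g (f - f') A B (I - I') := by
  intro ε hε
  obtain ⟨δ, hδ, hS⟩ := hf (ε / 2) (half_pos hε)
  obtain ⟨δ', hδ', hS'⟩ := hf' (ε / 2) (half_pos hε)
  refine ⟨min δ δ', lt_min hδ hδ', fun n x hx hmesh => ?_⟩
  have h := hS n x hx fun i => (hmesh i).trans_le (min_le_left _ _)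
  have h' := hS' n x hx fun i => (hmesh i).trans_le (min_le_right _ _)
  have hsplit : ∑ i : Fin n, g (x i.castSucc) * ((f - f') (x i.succ) - (f - f') (x i.castSucc)) -
      (I - I') = (∑ i : Fin n, g (x i.castSucc) * (f (x i.succ) - f (x i.castSucc)) - I) -
        (∑ i : Fin n, g (x i.castSucc) * (f' (x i.succ) - f' (x i.castSucc)) - I') := by
    rw [sub_sub_sub_comm, ← sum_sub_distrib]
    congr 1
    exact sum_congr rfl fun i _ => by simp only [Pi.sub_apply]; ring
  rw [hsplit]
  exact (abs_sub _ _).trans_lt (by linarith)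

theorem abs_le (hAB : A ≤ B) (hf : IsYoungIntegral g f A B I) {C : ℝ}
    (hC : ∀ (n : ℕ) (x : Fin (n + 1) → ℝ), IsPartition A B x →
      |∑ i : Fin n, g (x i.castSucc) * (f (x i.succ) - f (x i.castSucc))| ≤ C) :
    |I| ≤ C := by
  refine le_of_forall_pos_lt_add fun ε hε => ?_
  obtain ⟨δ, hδ, hS⟩ := hf ε hε
  obtain ⟨n, x, hx, hmesh⟩ := exists_isPartition_forall_sub_lt hAB hδ
  have h := hS n x hx hmesh
  have := abs_sub_abs_le_abs_sub I
    (∑ i : Fin n, g (x i.castSucc) * (f (x i.succ) - f (x i.castSucc)))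
  rw [abs_sub_comm] at this
  linarith [hC n x hx]

theorem abs_sub_le {p p' q G C C' s I' : ℝ} {f' : ℝ → ℝ} (hAB : A ≤ B) (hq : 0 < q) (hp : 1 ≤ p)
    (hpp' : p < p') (hp'q : 1 < 1 / q + 1 / p') (hg : PVarBound q A B g G)
    (hfC : PVarBound p A B f C) (hfC' : PVarBound p A B f' C')
    (hs : ∀ y ∈ Icc A B, ∀ z ∈ Icc A B, |(f - f') y - (f - f') z| ≤ s)
    (hf : IsYoungIntegral g f A B I) (hf' : IsYoungIntegral g f' A B I') :
    |I - I'| ≤ |g A| * s + G ^ (1 / q) * (s ^ (p' - p) * (2 ^ (p - 1) * (C + C'))) ^ (1 / p') *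
      ∑' k : ℕ, (2 / k : ℝ) ^ (1 / q + 1 / p') := by
  have hp' : 0 < p' := one_pos.trans_le hp |>.trans hpp'
  have hdiff := (hfC.sub hp hfC').of_abs_sub_le hp' hpp'.le hs
  refine (hf.sub hf').abs_le hAB fun n x hx =>
    (hg.abs_sum_isPartition_le hq hp' hp'q hdiff hx).trans ?_
  exact add_le_add_left (mul_le_mul_of_nonneg_left
    (hs B ⟨hAB, le_rfl⟩ A ⟨le_rfl, hAB⟩) (abs_nonneg _)) _

end IsYoungIntegral

theorem exists_lt_one_lt_one_div_add {p q : ℝ} (hp : 0 < p) (hpq : 1 < 1 / p + 1 / q) :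
    ∃ p', p < p' ∧ 1 < 1 / q + 1 / p' := by
  obtain ⟨α, hα, hαp⟩ :=
    exists_between (max_lt (one_div_pos.mpr hp) (by linarith : 1 - 1 / q < 1 / p))
  have hα0 : 0 < α := (le_max_left _ _).trans_lt hα
  refine ⟨1 / α, (lt_one_div hp hα0).mpr hαp, ?_⟩
  rw [one_div_one_div]
  linarith [le_max_right 0 (1 - 1 / q)]

theorem tendsto_mul_add_rpow_mul_nhdsGT_zero {a b c D γ δ : ℝ} (hγ : 0 < γ) (hδ : 0 < δ) :
    Tendsto (fun s : ℝ => a * s + b * (s ^ γ * D) ^ δ * c) (nhdsWithin 0 (Ioi 0)) (nhds 0) := by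
  have hcont : Continuous fun s : ℝ => a * s + b * (s ^ γ * D) ^ δ * c := by
    fun_prop (disch := exact le_of_lt ‹_›)
  simpa [Real.zero_rpow hγ.ne', Real.zero_rpow hδ.ne'] using
    (hcont.tendsto 0).mono_left nhdsWithin_le_nhds

theorem tendsto_of_forall_eventually_abs_sub_le {α : Type*} {l : Filter α} {u : α → ℝ}
    {a : ℝ} {ψ : ℝ → ℝ} (hψ : Tendsto ψ (nhdsWithin 0 (Ioi 0)) (nhds 0))
    (h : ∀ t > 0, ∀ᶠ n in l, |u n - a| ≤ ψ t) : Tendsto u l (nhds a) := by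
  refine Metric.tendsto_nhds.mpr fun ε hε => ?_
  obtain ⟨t, hψt, ht⟩ := ((hψ.eventually (gt_mem_nhds hε)).and self_mem_nhdsWithin).exists
  exact (h t ht).mono fun n hn => (Real.dist_eq _ _).trans_lt (hn.trans_lt hψt)

theorem stmt14_general (A B p q K : ℝ) (hAB : A < B) (hp : 1 ≤ p) (hq : 1 ≤ q)
    (hpq : 1 / p + 1 / q > 1)
    (g : ℝ → ℝ) (hgq : pVar q A B g ≠ ⊤)
    (f : ℕ → ℝ → ℝ) (f₀ : ℝ → ℝ)
    (hK : ∀ n, (pVar p A B (f n)) ^ (1 / p) ≤ ENNReal.ofReal K)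
    (hunif : ∀ ε > (0:ℝ), ∃ N : ℕ, ∀ n ≥ N, ∀ x ∈ Set.Icc A B, |f n x - f₀ x| ≤ ε)
    (I : ℕ → ℝ) (I₀ : ℝ)
    (hI : ∀ n, IsYoungIntegral g (f n) A B (I n)) (hI₀ : IsYoungIntegral g f₀ A B I₀) :
    Filter.Tendsto I Filter.atTop (nhds I₀) := by
  have hp0 : 0 < p := one_pos.trans_le hp
  have hq0 : 0 < q := one_pos.trans_le hq
  obtain ⟨p', hpp', hp'q⟩ := exists_lt_one_lt_one_div_add hp0 hpq
  have hp'0 : 0 < p' := hp0.trans hpp'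
  set G := (pVar q A B g).toReal
  set C := max K 0 ^ p
  have hg : PVarBound q A B g G :=
    .of_pVar_le hq0.le ENNReal.toReal_nonneg (ENNReal.ofReal_toReal hgq).ge
  have hf : ∀ n, PVarBound p A B (f n) C := fun n => .of_rpow_one_div_le hp0 (hK n)
  have hf₀ : PVarBound p A B f₀ C := .of_tendsto hp0.le hf fun y hy =>
    Metric.tendsto_atTop.mpr fun ε hε => (hunif (ε / 2) (half_pos hε)).imp
      fun N hN n hn => (Real.dist_eq _ _).trans_lt ((hN n hn y hy).trans_lt (half_lt_self hε))
  have hbound : ∀ s > 0, ∀ᶠ n in atTop, |I n - I₀| ≤ |g A| * s +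
      G ^ (1 / q) * (s ^ (p' - p) * (2 ^ (p - 1) * (C + C))) ^ (1 / p') *
        ∑' k : ℕ, (2 / k : ℝ) ^ (1 / q + 1 / p') := by
    intro s hs
    obtain ⟨N, hN⟩ := hunif (s / 2) (half_pos hs)
    refine eventually_atTop.mpr ⟨N, fun n hn =>
      (hI n).abs_sub_le hAB.le hq0 hp hpp' hp'q hg (hf n) hf₀ (fun y hy z hz => ?_) hI₀⟩
    have := abs_sub (f n y - f₀ y) (f n z - f₀ z)
    simp only [Pi.sub_apply]
    linarith [hN n hn y hy, hN n hn z hz]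
  exact tendsto_of_forall_eventually_abs_sub_le
    (tendsto_mul_add_rpow_mul_nhdsGT_zero (sub_pos.mpr hpp') (one_div_pos.mpr hp'0)) hbound

/-- Convergence of Young integrals: if `g` is continuous with finite `q`-variation, the `fₙ`
have a uniform `p`-variation bound and converge uniformly to `f`, and `1/p + 1/q > 1`, then
`∫_A^B g dfₙ → ∫_A^B g df`. -/
theorem stmt14 (A B p q K : ℝ) (hAB : A < B) (hp : 1 ≤ p) (hq : 1 ≤ q)
    (hpq : 1 / p + 1 / q > 1)
    (g : ℝ → ℝ) (hg : ContinuousOn g (Set.Icc A B)) (hgq : pVar q A B g ≠ ⊤)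
    (f : ℕ → ℝ → ℝ) (f₀ : ℝ → ℝ)
    (hK : ∀ n, (pVar p A B (f n)) ^ (1 / p) ≤ ENNReal.ofReal K)
    (hunif : ∀ ε > (0:ℝ), ∃ N : ℕ, ∀ n ≥ N, ∀ x ∈ Set.Icc A B, |f n x - f₀ x| ≤ ε)
    (I : ℕ → ℝ) (I₀ : ℝ)
    (hI : ∀ n, IsYoungIntegral g (f n) A B (I n)) (hI₀ : IsYoungIntegral g f₀ A B I₀) :
    Filter.Tendsto I Filter.atTop (nhds I₀) :=
  stmt14_general A B p q K hAB hp hq hpq g hgq f f₀ hK hunif I I₀ hI hI₀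
end
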